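/- Every k-equal non-crossing partition of {1,...,kn} can be obtained from the one-block partition 1_k of {1,...,k} by a finite sequence of interval-block insertions Ĩ_{r}^{k} (each inserting an interval block of size k at some position). -/

import Mathlib

open scoped BigOperators Classical

/-- Partitions of `Fin n` (i.e. of `{1,…,n}`). -/
abbrev NCP (n : ℕ) := Finpartition (Finset.univ : Finset (Fin n))

/-- `x` and `y` lie in the same block of `P`. -/
def pRel {n : ℕ} (P : NCP n) (x y : Fin n) : Prop := ∃ t ∈ P.parts, x ∈ t ∧ y ∈ t

/-- `P` is a non-crossing partition. -/
def IsNonCrossing {n : ℕ} (P : NCP n) : Prop :=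
  ∀ a b c d : Fin n, a < b → b < c → c < d → pRel P a c → pRel P b d → pRel P a b

/-- Every block of `P` has exactly `k` elements (`k`-equal). -/
def IsKEqual (k : ℕ) {n : ℕ} (P : NCP n) : Prop := ∀ t ∈ P.parts, t.card = k

/-- Every block of `P` has size divisible by `k` (`k`-divisible). -/
def IsKDivisible (k : ℕ) {n : ℕ} (P : NCP n) : Prop := ∀ t ∈ P.parts, k ∣ t.card

/-- Every block of `P` contains only numbers of one residue class mod `k`. -/
def IsKPreserving (k : ℕ) {n : ℕ} (P : NCP n) : Prop :=
  ∀ t ∈ P.parts, ∀ x ∈ t, ∀ y ∈ t, (x : ℕ) % k = (y : ℕ) % k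

/-- The relation on `{1,…,2n}` obtained by putting `P` on the odd positions and `Q` on
the even positions (0-indexed: `P` on evens, `Q` on odds). -/
def jointRel {n : ℕ} (P Q : NCP n) (x y : Fin (2 * n)) : Prop :=
  ((x : ℕ) % 2 = 0 ∧ (y : ℕ) % 2 = 0 ∧
      pRel P ⟨(x : ℕ) / 2, by have := x.isLt; omega⟩ ⟨(y : ℕ) / 2, by have := y.isLt; omega⟩) ∨
  ((x : ℕ) % 2 = 1 ∧ (y : ℕ) % 2 = 1 ∧
      pRel Q ⟨(x : ℕ) / 2, by have := x.isLt; omega⟩ ⟨(y : ℕ) / 2, by have := y.isLt; omega⟩)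

/-- A symmetric-relation analogue of non-crossing. -/
def RelNonCrossing {m : ℕ} (R : Fin m → Fin m → Prop) : Prop :=
  ∀ a b c d : Fin m, a < b → b < c → c < d → R a c → R b d → R a b

/-- `Q` is the Kreweras complement of `P`: the union `P ∪ Q` (interleaved) is non-crossing and
`Q` is the largest such partition in the reverse refinement order. -/
def IsKr {n : ℕ} (P Q : NCP n) : Prop :=
  RelNonCrossing (jointRel P Q) ∧ ∀ Q' : NCP n, RelNonCrossing (jointRel P Q') → Q' ≤ Q

/-- Position correspondence for the duplication–insertion operation `I_r^j` (1-indexed `r`):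
position `x` of the new partition corresponds to position `a` of the old one. Positions
`r+1,…,r+j-1` (1-indexed) correspond to nothing (they are singletons), and both positions
`r` and `r+j` correspond to the old position `r`. -/
def dRel (j r : ℕ) {n : ℕ} (x : Fin (n + j)) (a : Fin n) : Prop :=
  ((x : ℕ) < r ∧ (a : ℕ) = (x : ℕ)) ∨
  ((x : ℕ) = r - 1 + j ∧ (a : ℕ) = r - 1) ∨
  (r - 1 + j < (x : ℕ) ∧ (a : ℕ) + j = (x : ℕ))

/-- `P'` is obtained from `P` by the duplication–insertion operation `I_r^j`: the element at
(1-indexed) position `r` is duplicated (positions `r` and `r+j` are joined into the block that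
contained `r`) and `j-1` singletons are inserted between them. -/
def IsDupIns {n : ℕ} (j r : ℕ) (P : NCP n) (P' : NCP (n + j)) : Prop :=
  ∀ x y : Fin (n + j), pRel P' x y ↔
    (x = y ∨ ∃ a b : Fin n, dRel j r x a ∧ dRel j r y b ∧ pRel P a b)

/-- Position correspondence for the interval-insertion operation `Ĩ_r^j` (1-indexed `r`):
the new interval block occupies (1-indexed) positions `r,…,r+j-1`. -/
def iRel (j r : ℕ) {n : ℕ} (x : Fin (n + j)) (a : Fin n) : Prop :=
  ((x : ℕ) < r - 1 ∧ (a : ℕ) = (x : ℕ)) ∨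
  (r - 1 + j ≤ (x : ℕ) ∧ (a : ℕ) + j = (x : ℕ))

/-- `P'` is obtained from `P` by the interval-insertion operation `Ĩ_r^j`: a new interval block
of size `j` is inserted between (1-indexed) positions `r-1` and `r`. -/
def IsIntIns {n : ℕ} (j r : ℕ) (P : NCP n) (P' : NCP (n + j)) : Prop :=
  ∀ x y : Fin (n + j), pRel P' x y ↔
    ((r - 1 ≤ (x : ℕ) ∧ (x : ℕ) < r - 1 + j ∧ r - 1 ≤ (y : ℕ) ∧ (y : ℕ) < r - 1 + j) ∨
      ∃ a b : Fin n, iRel j r x a ∧ iRel j r y b ∧ pRel P a b)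

/-- Partitions of `{1,…,kn}` reachable from the one-block partition `1_k` of `{1,…,k}` by a
finite sequence of interval-block insertions `Ĩ_r^k`. -/
inductive ReachK (k : ℕ) : (n : ℕ) → NCP (k * n) → Prop
  | base (P : NCP (k * 1)) (h : ∀ x y : Fin (k * 1), pRel P x y) : ReachK k 1 P
  | step (n r : ℕ) (P : NCP (k * n)) (P' : NCP (k * n + k)) (hr : 1 ≤ r)
      (hr' : r ≤ k * n + 1) (hP : ReachK k n P) (h : IsIntIns k r P P') :
      ReachK k (n + 1) P'

/-
A non-crossing partition of a nonempty interval always has a block which is itself an interval: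
a block of minimal span works, since a block nested strictly inside its span would have a smaller
span. Deleting such a block from a `k`-equal non-crossing partition of `{1,…,k(n+1)}` and closing
the gap leaves a `k`-equal non-crossing partition of `{1,…,kn}` from which the original one is
recovered by an interval insertion `Ĩ_r^k`, so the theorem follows by induction on `n`.
-/

open Finset

section Blocks

variable {m : ℕ}

lemma pRel_iff_mem_part (P : NCP m) (x y : Fin m) : pRel P x y ↔ y ∈ P.part x := by
  rw [Finpartition.mem_part_iff_exists]
  exact exists_congr fun _ => and_congr_right' and_comm

lemma pRel_iff_part_eq (P : NCP m) (x y : Fin m) : pRel P x y ↔ P.part x = P.part y := by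
  rw [pRel_iff_mem_part, P.mem_part_iff_part_eq_part (mem_univ y) (mem_univ x), eq_comm]

lemma pRel_symm {P : NCP m} {x y : Fin m} : pRel P x y → pRel P y x
  | ⟨t, ht, hx, hy⟩ => ⟨t, ht, hy, hx⟩

lemma pRel_trans {P : NCP m} {x y z : Fin m} (hxy : pRel P x y) (hyz : pRel P y z) :
    pRel P x z := by
  rw [pRel_iff_part_eq] at *
  exact hxy.trans hyz

lemma pRel_iff_of_mem_parts {P : NCP m} {t : Finset (Fin m)} (ht : t ∈ P.parts) {x : Fin m}
    (hx : x ∈ t) (y : Fin m) : pRel P x y ↔ y ∈ t := by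
  rw [pRel_iff_mem_part, P.part_eq_of_mem ht hx]

lemma pRel_of_isKEqual_self {P : NCP m} (hE : IsKEqual m P) (x y : Fin m) : pRel P x y := by
  have hcard : (P.part x).card = Fintype.card (Fin m) :=
    (hE _ (P.part_mem.2 (mem_univ x))).trans (Fintype.card_fin m).symm
  rw [pRel_iff_mem_part, eq_univ_of_card _ hcard]
  exact mem_univ y

end Blocks

section NonCrossing

variable {m : ℕ} {P : NCP m}

lemma IsNonCrossing.mem_Ioo_of_pRel (hP : IsNonCrossing P) {a b y z : Fin m}
    (hab : pRel P a b) (hay : a < y) (hyb : y < b) (hy : ¬ pRel P a y) (hz : pRel P y z) :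
    a < z ∧ z < b := by
  refine ⟨lt_of_not_ge fun hza => hy ?_, lt_of_not_ge fun hbz => hy ?_⟩
  · rcases hza.lt_or_eq with hza | rfl
    · exact pRel_trans (pRel_symm (hP z a y b hza hay hyb (pRel_symm hz) hab)) (pRel_symm hz)
    · exact pRel_symm hz
  · rcases hbz.lt_or_eq with hbz | rfl
    · exact hP a y b z hay hyb hbz hab hz
    · exact pRel_trans hab (pRel_symm hz)

theorem IsNonCrossing.exists_Icc_mem_parts (hP : IsNonCrossing P) (hm : 0 < m) :
    ∃ a b : Fin m, Icc a b ∈ P.parts := by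
  have hne (x : Fin m) : (P.part x).Nonempty := ⟨x, P.mem_part (mem_univ x)⟩
  have hpart (x : Fin m) : P.part x ∈ P.parts := P.part_mem.2 (mem_univ x)
  obtain ⟨x, -, hx⟩ := exists_min_image univ
    (fun x => ((P.part x).max' (hne x) : ℕ) - (P.part x).min' (hne x)) ⟨⟨0, hm⟩, mem_univ _⟩
  set lo := (P.part x).min' (hne x)
  set hi := (P.part x).max' (hne x)
  refine ⟨lo, hi, ?_⟩
  suffices Icc lo hi = P.part x from this ▸ hpart x
  refine Subset.antisymm (fun y hy => ?_) fun y hy => mem_Icc.2 ⟨min'_le _ y hy, le_max' _ y hy⟩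
  by_contra hyx
  rw [mem_Icc] at hy
  have hlo := min'_mem _ (hne x)
  have hhi := max'_mem _ (hne x)
  have hly : lo < y := hy.1.lt_of_ne fun h => hyx (h ▸ hlo)
  have hyh : y < hi := hy.2.lt_of_ne fun h => hyx (h ▸ hhi)
  have hsep : ¬ pRel P lo y := (pRel_iff_of_mem_parts (hpart x) hlo y).not.2 hyx
  have hspan := (pRel_iff_of_mem_parts (hpart x) hlo hi).2 hhi
  have h₁ := hP.mem_Ioo_of_pRel hspan hly hyh hsep
    ((pRel_iff_mem_part P y _).2 (min'_mem _ (hne y)))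
  have h₂ := hP.mem_Ioo_of_pRel hspan hly hyh hsep
    ((pRel_iff_mem_part P y _).2 (max'_mem _ (hne y)))
  have := hx y (mem_univ y)
  simp only [Fin.lt_def] at h₁ h₂
  omega

end NonCrossing

noncomputable def NCP.comap {m n : ℕ} (P : NCP n) (f : Fin m → Fin n) : NCP m :=
  Finpartition.ofSetoid (Setoid.ker fun a => P.part (f a))

section Comap

variable {m n k : ℕ} {P : NCP n} {f : Fin m → Fin n}

lemma pRel_comap {a b : Fin m} : pRel (NCP.comap P f) a b ↔ pRel P (f a) (f b) := by
  rw [pRel_iff_mem_part, NCP.comap, Finpartition.mem_part_ofSetoid_iff_rel, Setoid.ker_def,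
    pRel_iff_part_eq]

lemma IsNonCrossing.comap (hP : IsNonCrossing P) (hf : StrictMono f) :
    IsNonCrossing (NCP.comap P f) := by
  intro a b c d hab hbc hcd hac hbd
  rw [pRel_comap] at *
  exact hP _ _ _ _ (hf hab) (hf hbc) (hf hcd) hac hbd

lemma map_part_comap (hf : Function.Injective f)
    (hclosed : ∀ a y, pRel P (f a) y → y ∈ Set.range f) (a : Fin m) :
    ((NCP.comap P f).part a).map ⟨f, hf⟩ = P.part (f a) := by
  ext y
  simp only [mem_map, Function.Embedding.coeFn_mk, ← pRel_iff_mem_part, pRel_comap]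
  constructor
  · rintro ⟨b, hb, rfl⟩
    exact hb
  · intro hy
    obtain ⟨b, rfl⟩ := hclosed a y hy
    exact ⟨b, hy, rfl⟩

lemma IsKEqual.comap (hE : IsKEqual k P) (hf : Function.Injective f)
    (hclosed : ∀ a y, pRel P (f a) y → y ∈ Set.range f) : IsKEqual k (NCP.comap P f) := by
  intro s hs
  obtain ⟨a, ha⟩ := Finpartition.nonempty_of_mem_parts _ hs
  rw [← Finpartition.part_eq_of_mem _ hs ha, ← card_map ⟨f, hf⟩, map_part_comap hf hclosed]
  exact hE _ (P.part_mem.2 (mem_univ _))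

end Comap

def shiftFrom (L j : ℕ) {m : ℕ} (a : Fin m) : Fin (m + j) :=
  if (a : ℕ) < L then a.castAdd j else a.addNat j

section ShiftFrom

variable {L j m : ℕ}

lemma val_shiftFrom (a : Fin m) :
    (shiftFrom L j a : ℕ) = if (a : ℕ) < L then (a : ℕ) else a + j := by
  unfold shiftFrom
  split <;> rfl

lemma shiftFrom_strictMono : StrictMono (shiftFrom L j : Fin m → Fin (m + j)) := by
  intro a b hab
  rw [Fin.lt_def, val_shiftFrom, val_shiftFrom]
  rw [Fin.lt_def] at hab
  split <;> split <;> omega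

lemma iRel_iff_shiftFrom_eq (x : Fin (m + j)) (a : Fin m) :
    iRel j (L + 1) x a ↔ shiftFrom L j a = x := by
  rw [iRel, Fin.ext_iff, val_shiftFrom, Nat.add_sub_cancel]
  split <;> omega

lemma mem_range_shiftFrom (hL : L ≤ m) (x : Fin (m + j)) :
    x ∈ Set.range (shiftFrom L j) ↔ ¬ (L ≤ (x : ℕ) ∧ (x : ℕ) < L + j) := by
  constructor
  · rintro ⟨a, rfl⟩
    rw [val_shiftFrom]
    split <;> omega
  · intro hx
    have := x.isLt
    by_cases hxL : (x : ℕ) < L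
    · exact ⟨⟨x, by omega⟩, Fin.ext <| by rw [val_shiftFrom, if_pos hxL]⟩
    · refine ⟨⟨x - j, by omega⟩, Fin.ext ?_⟩
      rw [val_shiftFrom]
      dsimp only
      split <;> omega

end ShiftFrom

theorem exists_isIntIns_of_interval_mem_parts {m j k L : ℕ} {P : NCP (m + j)}
    (hP : IsNonCrossing P) (hE : IsKEqual k P) (hL : L ≤ m) {t : Finset (Fin (m + j))}
    (ht : t ∈ P.parts) (hmem : ∀ x, x ∈ t ↔ L ≤ (x : ℕ) ∧ (x : ℕ) < L + j) :
    ∃ Q : NCP m, IsNonCrossing Q ∧ IsKEqual k Q ∧ IsIntIns j (L + 1) Q P := by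
  have hrange (x : Fin (m + j)) : x ∈ Set.range (shiftFrom L j) ↔ x ∉ t := by
    rw [mem_range_shiftFrom hL, hmem]
  have hclosed {x y : Fin (m + j)} (h : pRel P x y) (hy : y ∈ t) : x ∈ t :=
    (pRel_iff_of_mem_parts ht hy x).1 (pRel_symm h)
  refine ⟨NCP.comap P (shiftFrom L j), hP.comap shiftFrom_strictMono,
    hE.comap shiftFrom_strictMono.injective fun a y h => (hrange y).2 fun hy =>
      (hrange _).1 ⟨a, rfl⟩ (hclosed h hy), fun x y => ?_⟩
  simp only [iRel_iff_shiftFrom_eq, pRel_comap, Nat.add_sub_cancel]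
  constructor
  · intro h
    by_cases hx : x ∈ t
    · left
      have hy := (pRel_iff_of_mem_parts ht hx y).1 h
      rw [hmem] at hx hy
      omega
    · right
      obtain ⟨a, rfl⟩ := (hrange x).2 hx
      obtain ⟨b, rfl⟩ := (hrange y).2 fun hy => hx (hclosed h hy)
      exact ⟨a, b, rfl, rfl, h⟩
  · rintro (⟨hx₁, hx₂, hy₁, hy₂⟩ | ⟨a, b, rfl, rfl, h⟩)
    · exact (pRel_iff_of_mem_parts ht ((hmem x).2 ⟨hx₁, hx₂⟩) y).2 ((hmem y).2 ⟨hy₁, hy₂⟩)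
    · exact h

/-- Every `k`-equal non-crossing partition of `{1,…,kn}` is obtained from the one-block
partition of `{1,…,k}` by a finite sequence of interval-block insertions of size `k`. -/
theorem stmt13 (k n : ℕ) (hk : 0 < k) (hn : 1 ≤ n) (P : NCP (k * n))
    (hP : IsNonCrossing P) (hE : IsKEqual k P) : ReachK k n P := by
  induction n with
  | zero => omega
  | succ n ih =>
    rcases Nat.eq_zero_or_pos n with rfl | hpos
    · exact ReachK.base P (pRel_of_isKEqual_self fun t ht => (hE t ht).trans (mul_one k).symm)
    obtain ⟨a, b, hab⟩ := hP.exists_Icc_mem_parts (Nat.mul_pos hk n.succ_pos)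
    have hcard : (b : ℕ) + 1 - a = k := (Fin.card_Icc a b).symm.trans (hE _ hab)
    have hmem (x : Fin (k * n + k)) : x ∈ Icc a b ↔ (a : ℕ) ≤ x ∧ (x : ℕ) < a + k := by
      rw [mem_Icc, Fin.le_def, Fin.le_def]
      omega
    have hb : (b : ℕ) < k * n + k := b.isLt
    obtain ⟨Q, hQ, hQE, hins⟩ :=
      exists_isIntIns_of_interval_mem_parts (m := k * n) hP hE (by omega) hab hmem
    exact ReachK.step n (a + 1) Q P (by omega) (by omega) (ih hpos Q hQ hQE) hins
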